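/- Let n ≥ 1, C₁ > 0, α ∈ (0,1), K ≥ 0, and let σ : (0,t] → ℝ be nonnegative with σ(r) ≤ C₁(r/t)^{n+1}σ(t) + C₁K r^{n+α} for all r ∈ (0,t]. Define for 0 < r ≤ R ≤ t the quantity Δ(r,R) := |a(R) − a(r)|, where a : (0,t] → ℝᵏ satisfies |a(R) − a(r)|² ≤ (4C₁/|B_r|)[(R/t)^{n+1}σ(t) + K R^{n+α}] whenever 0 < r < R ≤ t and r ≥ R/2. Then there exists a constant C₂ depending only on n, α, C₁ such that for all 0 < r ≤ R ≤ t, |a(R) − a(r)|² ≤ C₂( (R/t^{n+1})σ(t) + K R^α ). -/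
import Mathlib


open Real

private lemma sqrtPow {x : ℝ} (hx : 0 ≤ x) (i : ℕ) :
    Real.sqrt (x ^ i) = (Real.sqrt x) ^ i := by
  induction i with
  | zero => simp
  | succ i ih => rw [pow_succ, pow_succ, Real.sqrt_mul (pow_nonneg hx i), ih]

private lemma sqrtAddLe {x y : ℝ} (hx : 0 ≤ x) (hy : 0 ≤ y) :
    Real.sqrt (x + y) ≤ Real.sqrt x + Real.sqrt y := by
  have h : x + y ≤ (Real.sqrt x + Real.sqrt y) ^ 2 := by
    nlinarith [Real.sq_sqrt hx, Real.sq_sqrt hy,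
      mul_nonneg (Real.sqrt_nonneg x) (Real.sqrt_nonneg y)]
  calc Real.sqrt (x + y) ≤ Real.sqrt ((Real.sqrt x + Real.sqrt y) ^ 2) :=
        Real.sqrt_le_sqrt h
    _ = Real.sqrt x + Real.sqrt y := Real.sqrt_sq (by positivity)

set_option maxHeartbeats 1000000 in
/-- The dyadic telescoping argument of Lemma 4.3. -/
theorem dyadic_telescoping (n k : ℕ) (C₁ α K t b1 : ℝ) (σ : ℝ → ℝ)
    (a : ℝ → EuclideanSpace ℝ (Fin k))
    (hn : 1 ≤ n) (hC₁ : 0 < C₁) (hα : α ∈ Set.Ioo (0:ℝ) 1) (hK : 0 ≤ K)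
    (ht : 0 < t) (hb1 : 0 < b1)
    (hσ0 : ∀ r : ℝ, 0 < r → r ≤ t → 0 ≤ σ r)
    (hσ : ∀ r : ℝ, 0 < r → r ≤ t →
      σ r ≤ C₁ * (r / t) ^ ((n : ℝ) + 1) * σ t + C₁ * K * r ^ ((n : ℝ) + α))
    (ha : ∀ r R : ℝ, 0 < r → r < R → R ≤ t → R / 2 ≤ r →
      ‖a R - a r‖ ^ 2
        ≤ (4 * C₁ / (b1 * r ^ (n : ℝ))) *
            ((R / t) ^ ((n : ℝ) + 1) * σ t + K * R ^ ((n : ℝ) + α))) :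
    ∃ C₂ : ℝ, 0 < C₂ ∧ ∀ r R : ℝ, 0 < r → r ≤ R → R ≤ t →
      ‖a R - a r‖ ^ 2
        ≤ C₂ * ((R / t ^ ((n : ℝ) + 1)) * σ t + K * R ^ α) := by
  obtain ⟨hα0, hα1⟩ := hα
  have hσt : 0 ≤ σ t := hσ0 t ht le_rfl
  set c2 : ℝ := 2 ^ ((n : ℝ) + 2) * C₁ / b1 with hc2def
  have hc2 : 0 < c2 :=
    div_pos (mul_pos (Real.rpow_pos_of_pos two_pos _) hC₁) hb1
  set q : ℝ := Real.sqrt (1 / 2) with hqdef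
  set p : ℝ := Real.sqrt ((2 : ℝ) ^ (-α)) with hpdef
  have hq0 : 0 ≤ q := Real.sqrt_nonneg _
  have hp0 : 0 ≤ p := Real.sqrt_nonneg _
  have hq2 : q ^ 2 = 1 / 2 := Real.sq_sqrt (by norm_num)
  have hp2 : p ^ 2 = (2 : ℝ) ^ (-α) :=
    Real.sq_sqrt (Real.rpow_nonneg (by norm_num) _)
  have hq1 : q < 1 := by
    rw [hqdef, show (1:ℝ) = Real.sqrt 1 by simp]
    exact Real.sqrt_lt_sqrt (by norm_num) (by norm_num)
  have h2α : (2 : ℝ) ^ (-α) < 1 :=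
    Real.rpow_lt_one_of_one_lt_of_neg one_lt_two (by linarith)
  have hp1 : p < 1 := by
    rw [hpdef, show (1:ℝ) = Real.sqrt 1 by simp]
    exact Real.sqrt_lt_sqrt (Real.rpow_nonneg (by norm_num) _) h2α
  set A : ℝ := Real.sqrt c2 * ((1 - q)⁻¹ + 1) with hAdef
  set B : ℝ := Real.sqrt c2 * ((1 - p)⁻¹ + 1) with hBdef
  have hA : 0 < A := by
    apply mul_pos (Real.sqrt_pos.mpr hc2)
    have : 0 < (1 - q)⁻¹ := inv_pos.mpr (by linarith)
    linarith
  have hB : 0 < B := by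
    apply mul_pos (Real.sqrt_pos.mpr hc2)
    have : 0 < (1 - p)⁻¹ := inv_pos.mpr (by linarith)
    linarith
  refine ⟨A ^ 2 + A * B + B ^ 2 + 1, by positivity, ?_⟩
  intro r R hr hrR hRt
  have hR : 0 < R := lt_of_lt_of_le hr hrR
  set X : ℝ := R / t ^ ((n : ℝ) + 1) * σ t with hX
  set Y : ℝ := K * R ^ α with hY
  have hX0 : 0 ≤ X := by
    rw [hX]
    exact mul_nonneg (div_nonneg hR.le (Real.rpow_nonneg ht.le _)) hσt
  have hY0 : 0 ≤ Y := by
    rw [hY]; exact mul_nonneg hK (Real.rpow_nonneg hR.le _)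
  -- the single dyadic step estimate
  have step : ∀ (i : ℕ) (s : ℝ), 0 < s → s < R / 2 ^ i → R / 2 ^ i / 2 ≤ s →
      ‖a (R / 2 ^ i) - a s‖
        ≤ Real.sqrt c2 * (q ^ i * Real.sqrt X + p ^ i * Real.sqrt Y) := by
    intro i s hs hslt hs2
    set ρ : ℝ := R / 2 ^ i with hρ
    have h2ipos : (0 : ℝ) < 2 ^ i := by positivity
    have hρ0 : 0 < ρ := div_pos hR h2ipos
    have hρR : ρ ≤ R := div_le_self hR.le (one_le_pow₀ one_le_two)
    have hρt : ρ ≤ t := hρR.trans hRt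
    have key := ha s ρ hs hslt hρt hs2
    have h12 : ((1 : ℝ) / 2) ^ i = ((2 : ℝ) ^ i)⁻¹ := by
      rw [one_div, inv_pow]
    have hρ' : ρ = R * ((2 : ℝ) ^ i)⁻¹ := by rw [hρ, div_eq_mul_inv]
    have hρα : ρ ^ α = ((2 : ℝ) ^ (-α)) ^ i * R ^ α := by
      have e1 : ((2 : ℝ) ^ (-α)) ^ i = (((2 : ℝ) ^ i) ^ α)⁻¹ := by
        rw [← Real.rpow_natCast ((2 : ℝ) ^ (-α)) i,
          ← Real.rpow_natCast (2 : ℝ) i,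
          ← Real.rpow_mul (by norm_num : (0:ℝ) ≤ 2),
          ← Real.rpow_mul (by norm_num : (0:ℝ) ≤ 2),
          ← Real.rpow_neg (by norm_num : (0:ℝ) ≤ 2)]
        ring_nf
      rw [e1, hρ, Real.div_rpow hR.le h2ipos.le, div_eq_mul_inv]
      ring
    have hZ0 : 0 ≤ ρ / t ^ ((n : ℝ) + 1) * σ t + K * ρ ^ α :=
      add_nonneg (mul_nonneg (div_nonneg hρ0.le (Real.rpow_nonneg ht.le _)) hσt)
        (mul_nonneg hK (Real.rpow_nonneg hρ0.le _))
    have hsn : ρ ^ (n : ℝ) ≤ 2 ^ (n : ℝ) * s ^ (n : ℝ) := by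
      rw [← Real.mul_rpow (by norm_num) hs.le]
      exact Real.rpow_le_rpow hρ0.le (by linarith [hs2]) (Nat.cast_nonneg n)
    have hfrac : 4 * C₁ / (b1 * s ^ (n : ℝ)) * ρ ^ (n : ℝ) ≤ c2 := by
      have hsnpos : (0 : ℝ) < s ^ (n : ℝ) := Real.rpow_pos_of_pos hs _
      have e2 : (2 : ℝ) ^ ((n : ℝ) + 2) = 2 ^ (n : ℝ) * 4 := by
        rw [Real.rpow_add two_pos]
        norm_num
      rw [hc2def, div_mul_eq_mul_div, div_le_div_iff₀ (by positivity) hb1, e2]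
      have h' : 4 * C₁ * b1 * ρ ^ (n : ℝ) ≤ 4 * C₁ * b1 * (2 ^ (n : ℝ) * s ^ (n : ℝ)) :=
        mul_le_mul_of_nonneg_left hsn (by positivity)
      linarith [h']
    have hsq : ‖a ρ - a s‖ ^ 2
        ≤ c2 * (((1:ℝ)/2) ^ i * X + ((2 : ℝ) ^ (-α)) ^ i * Y) := by
      have e3 : (ρ / t) ^ ((n : ℝ) + 1) * σ t + K * ρ ^ ((n : ℝ) + α)
          = ρ ^ (n : ℝ) * (ρ / t ^ ((n : ℝ) + 1) * σ t + K * ρ ^ α) := by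
        rw [Real.div_rpow hρ0.le ht.le, Real.rpow_add hρ0 (n : ℝ) 1,
          Real.rpow_add hρ0 (n : ℝ) α, Real.rpow_one]
        ring
      have e4 : ρ / t ^ ((n : ℝ) + 1) * σ t + K * ρ ^ α
          = ((1:ℝ)/2) ^ i * X + ((2 : ℝ) ^ (-α)) ^ i * Y := by
        rw [hρα, hX, hY, h12]
        rw [hρ']
        ring
      calc ‖a ρ - a s‖ ^ 2
          ≤ 4 * C₁ / (b1 * s ^ (n : ℝ)) *
              ((ρ / t) ^ ((n : ℝ) + 1) * σ t + K * ρ ^ ((n : ℝ) + α)) := key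
        _ = 4 * C₁ / (b1 * s ^ (n : ℝ)) * ρ ^ (n : ℝ) *
              (ρ / t ^ ((n : ℝ) + 1) * σ t + K * ρ ^ α) := by rw [e3]; ring
        _ ≤ c2 * (ρ / t ^ ((n : ℝ) + 1) * σ t + K * ρ ^ α) :=
              mul_le_mul_of_nonneg_right hfrac hZ0
        _ = c2 * (((1:ℝ)/2) ^ i * X + ((2 : ℝ) ^ (-α)) ^ i * Y) := by rw [e4]
    have h1pos : (0:ℝ) ≤ ((1:ℝ)/2) ^ i * X := by positivity
    have h2pos : (0:ℝ) ≤ ((2 : ℝ) ^ (-α)) ^ i * Y := by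
      exact mul_nonneg (pow_nonneg (Real.rpow_nonneg (by norm_num) _) i) hY0
    calc ‖a ρ - a s‖ = Real.sqrt (‖a ρ - a s‖ ^ 2) :=
          (Real.sqrt_sq (norm_nonneg _)).symm
      _ ≤ Real.sqrt (c2 * (((1:ℝ)/2) ^ i * X + ((2 : ℝ) ^ (-α)) ^ i * Y)) :=
          Real.sqrt_le_sqrt hsq
      _ = Real.sqrt c2 *
            Real.sqrt (((1:ℝ)/2) ^ i * X + ((2 : ℝ) ^ (-α)) ^ i * Y) :=
          Real.sqrt_mul hc2.le _
      _ ≤ Real.sqrt c2 *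
            (Real.sqrt (((1:ℝ)/2) ^ i * X) + Real.sqrt (((2 : ℝ) ^ (-α)) ^ i * Y)) := by
          exact mul_le_mul_of_nonneg_left (sqrtAddLe h1pos h2pos)
            (Real.sqrt_nonneg _)
      _ = Real.sqrt c2 * (q ^ i * Real.sqrt X + p ^ i * Real.sqrt Y) := by
          rw [Real.sqrt_mul (by positivity) X,
            Real.sqrt_mul (pow_nonneg (Real.rpow_nonneg (by norm_num) _) i) Y,
            sqrtPow (by norm_num : (0:ℝ) ≤ 1/2) i,
            sqrtPow (Real.rpow_nonneg (by norm_num) (-α)) i, hqdef, hpdef]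
  -- telescoping
  have tele : ∀ i : ℕ, ‖a R - a (R / 2 ^ i)‖
      ≤ Real.sqrt c2 * ((∑ j ∈ Finset.range i, q ^ j) * Real.sqrt X
          + (∑ j ∈ Finset.range i, p ^ j) * Real.sqrt Y) := by
    intro i
    induction i with
    | zero => simp
    | succ i ih =>
      have hlt : R / 2 ^ (i + 1) < R / 2 ^ i := by
        apply div_lt_div_of_pos_left hR (by positivity)
        rw [pow_succ]
        linarith [pow_pos (two_pos (α := ℝ)) i]
      have heq : R / 2 ^ i / 2 = R / 2 ^ (i + 1) := by
        rw [div_div, ← pow_succ]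
      have hstep := step i (R / 2 ^ (i + 1)) (by positivity) hlt heq.le
      have tri : ‖a R - a (R / 2 ^ (i + 1))‖
          ≤ ‖a R - a (R / 2 ^ i)‖ + ‖a (R / 2 ^ i) - a (R / 2 ^ (i + 1))‖ := by
        have e : a R - a (R / 2 ^ (i + 1))
            = (a R - a (R / 2 ^ i)) + (a (R / 2 ^ i) - a (R / 2 ^ (i + 1))) := by
          abel
        rw [e]; exact norm_add_le _ _
      calc ‖a R - a (R / 2 ^ (i + 1))‖
          ≤ ‖a R - a (R / 2 ^ i)‖ + ‖a (R / 2 ^ i) - a (R / 2 ^ (i + 1))‖ := tri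
        _ ≤ Real.sqrt c2 * ((∑ j ∈ Finset.range i, q ^ j) * Real.sqrt X
              + (∑ j ∈ Finset.range i, p ^ j) * Real.sqrt Y)
            + Real.sqrt c2 * (q ^ i * Real.sqrt X + p ^ i * Real.sqrt Y) :=
            add_le_add ih hstep
        _ = Real.sqrt c2 * ((∑ j ∈ Finset.range (i + 1), q ^ j) * Real.sqrt X
              + (∑ j ∈ Finset.range (i + 1), p ^ j) * Real.sqrt Y) := by
            rw [Finset.sum_range_succ, Finset.sum_range_succ]; ring
  rcases eq_or_lt_of_le hrR with heq | hlt
  · subst heq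
    simp only [sub_self, norm_zero]
    have h0 : (0:ℝ) ≤ X + Y := add_nonneg hX0 hY0
    have : (0:ℝ) ^ 2 = 0 := by norm_num
    rw [this]
    exact mul_nonneg (by positivity) h0
  · -- find minimal N with R / 2^N ≤ r
    have hex : ∃ N : ℕ, R / 2 ^ N ≤ r := by
      obtain ⟨N, hN⟩ := pow_unbounded_of_one_lt (R / r) (one_lt_two (α := ℝ))
      refine ⟨N, ?_⟩
      rw [div_le_iff₀ (by positivity)]
      rw [div_lt_iff₀ hr] at hN
      linarith [mul_comm r ((2:ℝ) ^ N)]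
    set N := Nat.find hex with hNdef
    have hNspec : R / 2 ^ N ≤ r := Nat.find_spec hex
    have hN0 : N ≠ 0 := by
      intro h
      rw [h] at hNspec
      simp at hNspec
      linarith
    obtain ⟨M, hM⟩ : ∃ M, N = M + 1 := ⟨N - 1, (Nat.succ_pred_eq_of_ne_zero hN0).symm⟩
    have hMlt : r < R / 2 ^ M :=
      lt_of_not_ge (Nat.find_min hex (by omega))
    have hM2 : R / 2 ^ M / 2 ≤ r := by
      rw [div_div, ← pow_succ, ← hM]
      exact hNspec
    have h1 := tele M
    have h2 := step M r hr hMlt hM2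
    have hsumq : ∑ j ∈ Finset.range M, q ^ j ≤ (1 - q)⁻¹ := by
      have hs := Summable.sum_le_tsum (Finset.range M)
        (fun i _ => pow_nonneg hq0 i) (summable_geometric_of_lt_one hq0 hq1)
      rwa [tsum_geometric_of_lt_one hq0 hq1] at hs
    have hsump : ∑ j ∈ Finset.range M, p ^ j ≤ (1 - p)⁻¹ := by
      have hs := Summable.sum_le_tsum (Finset.range M)
        (fun i _ => pow_nonneg hp0 i) (summable_geometric_of_lt_one hp0 hp1)
      rwa [tsum_geometric_of_lt_one hp0 hp1] at hs
    have hqM : q ^ M ≤ 1 := pow_le_one₀ hq0 hq1.le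
    have hpM : p ^ M ≤ 1 := pow_le_one₀ hp0 hp1.le
    have hnorm : ‖a R - a r‖ ≤ A * Real.sqrt X + B * Real.sqrt Y := by
      have tri : ‖a R - a r‖ ≤ ‖a R - a (R / 2 ^ M)‖ + ‖a (R / 2 ^ M) - a r‖ := by
        have e : a R - a r = (a R - a (R / 2 ^ M)) + (a (R / 2 ^ M) - a r) := by abel
        rw [e]; exact norm_add_le _ _
      have hsx : (0:ℝ) ≤ Real.sqrt X := Real.sqrt_nonneg _
      have hsy : (0:ℝ) ≤ Real.sqrt Y := Real.sqrt_nonneg _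
      have hsc : (0:ℝ) ≤ Real.sqrt c2 := Real.sqrt_nonneg _
      calc ‖a R - a r‖ ≤ ‖a R - a (R / 2 ^ M)‖ + ‖a (R / 2 ^ M) - a r‖ := tri
        _ ≤ Real.sqrt c2 * ((∑ j ∈ Finset.range M, q ^ j) * Real.sqrt X
              + (∑ j ∈ Finset.range M, p ^ j) * Real.sqrt Y)
            + Real.sqrt c2 * (q ^ M * Real.sqrt X + p ^ M * Real.sqrt Y) :=
            add_le_add h1 h2
        _ ≤ Real.sqrt c2 * ((1 - q)⁻¹ * Real.sqrt X + (1 - p)⁻¹ * Real.sqrt Y)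
            + Real.sqrt c2 * (1 * Real.sqrt X + 1 * Real.sqrt Y) := by
            apply add_le_add
            · apply mul_le_mul_of_nonneg_left _ hsc
              exact add_le_add (mul_le_mul_of_nonneg_right hsumq hsx)
                (mul_le_mul_of_nonneg_right hsump hsy)
            · apply mul_le_mul_of_nonneg_left _ hsc
              exact add_le_add (mul_le_mul_of_nonneg_right hqM hsx)
                (mul_le_mul_of_nonneg_right hpM hsy)
        _ = A * Real.sqrt X + B * Real.sqrt Y := by
            rw [hAdef, hBdef]; ring
    have hsq2 : ‖a R - a r‖ ^ 2 ≤ (A * Real.sqrt X + B * Real.sqrt Y) ^ 2 :=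
      pow_le_pow_left₀ (norm_nonneg _) hnorm 2
    have hXs : Real.sqrt X ^ 2 = X := Real.sq_sqrt hX0
    have hYs : Real.sqrt Y ^ 2 = Y := Real.sq_sqrt hY0
    have hcross : 2 * (Real.sqrt X * Real.sqrt Y) ≤ X + Y := by
      have h := sq_nonneg (Real.sqrt X - Real.sqrt Y)
      have hexp : (Real.sqrt X - Real.sqrt Y) ^ 2
          = Real.sqrt X ^ 2 - 2 * (Real.sqrt X * Real.sqrt Y) + Real.sqrt Y ^ 2 := by
        ring
      rw [hexp, hXs, hYs] at h
      linarith
    calc ‖a R - a r‖ ^ 2 ≤ (A * Real.sqrt X + B * Real.sqrt Y) ^ 2 := hsq2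
      _ = A ^ 2 * Real.sqrt X ^ 2 + (A * B) * (2 * (Real.sqrt X * Real.sqrt Y))
            + B ^ 2 * Real.sqrt Y ^ 2 := by ring
      _ = A ^ 2 * X + (A * B) * (2 * (Real.sqrt X * Real.sqrt Y)) + B ^ 2 * Y := by
          rw [hXs, hYs]
      _ ≤ A ^ 2 * X + (A * B) * (X + Y) + B ^ 2 * Y := by
          have := mul_le_mul_of_nonneg_left hcross (mul_pos hA hB).le
          linarith
      _ ≤ (A ^ 2 + A * B + B ^ 2 + 1) * (X + Y) := by
          have h1 := mul_nonneg (sq_nonneg A) hY0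
          have h2 := mul_nonneg (sq_nonneg B) hX0
          linarith [h1, h2, hX0, hY0]
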